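/- arXiv:0902.1932 — 2 statements merged into one kernel-verified Lean document; each statement's English description precedes it below -/
import Mathlib

section
/- For every natural number k, the convex hull of the incidence vectors of the independent sets of M of cardinality at most k equals the set of all x ∈ ℝ^E satisfying x(F) ≤ r(F) for all nonempty F ⊆ E, x(E) ≤ k, and x_e ≥ 0 for all e ∈ E. -/
open Finset

/-- A (loopless) matroid on a finite ground set, given by its independent sets. -/
structure FinMatroid (α : Type*) [Fintype α] [DecidableEq α] where
  Indep : Finset α → Prop
  empty_indep : Indep ∅
  subset_indep : ∀ ⦃I J : Finset α⦄, Indep J → I ⊆ J → Indep I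
  exchange : ∀ ⦃I J : Finset α⦄, Indep I → Indep J → I.card < J.card →
    ∃ e ∈ J \ I, Indep (insert e I)
  loopless : ∀ e : α, Indep {e}

variable {α : Type*} [Fintype α] [DecidableEq α]

open Classical in
/-- The rank of a set: the maximum cardinality of an independent subset. -/
noncomputable def FinMatroid.r (M : FinMatroid α) (F : Finset α) : ℕ :=
  (F.powerset.filter M.Indep).sup Finset.card

/-- incidence vector -/
noncomputable def incVec (I : Finset α) : α → ℝ := fun e => if e ∈ I then 1 else 0

/-- x(S) = ∑_{e ∈ S} x_e -/
noncomputable def fsum (x : α → ℝ) (S : Finset α) : ℝ := ∑ e ∈ S, x e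

/-- closed set -/
def FinMatroid.ClosedSet (M : FinMatroid α) (F : Finset α) : Prop :=
  ∀ e ∉ F, M.r F < M.r (insert e F)

/-- F is separable -/
def FinMatroid.Separable (M : FinMatroid α) (F : Finset α) : Prop :=
  ∃ F₁ F₂ : Finset α, F₁ ≠ ∅ ∧ F₂ ≠ ∅ ∧ Disjoint F₁ F₂ ∧ F₁ ∪ F₂ = F ∧
    M.r F₁ + M.r F₂ ≤ M.r F

def FinMatroid.Inseparable (M : FinMatroid α) (F : Finset α) : Prop :=
  ¬ M.Separable F

/-- the k-rank r^k(F) = k - r(E \ F), as an integer -/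
noncomputable def FinMatroid.krank (M : FinMatroid α) (k : ℕ) (F : Finset α) : ℤ :=
  (k : ℤ) - (M.r Fᶜ : ℤ)

/-- F is k-separable -/
noncomputable def FinMatroid.kSeparable (M : FinMatroid α) (k : ℕ) (F : Finset α) : Prop :=
  ∃ F₁ F₂ : Finset α, F₁ ≠ ∅ ∧ F₂ ≠ ∅ ∧ Disjoint F₁ F₂ ∧ F₁ ∪ F₂ = F ∧
    M.krank k F₁ + M.krank k F₂ = M.krank k F

noncomputable def FinMatroid.kInseparable (M : FinMatroid α) (k : ℕ) (F : Finset α) : Prop :=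
  ¬ M.kSeparable k F

/-- convex hull of incidence vectors of independent sets of cardinality exactly k -/
noncomputable def exactPolytope (M : FinMatroid α) (k : ℕ) : Set (α → ℝ) :=
  convexHull ℝ {x | ∃ I : Finset α, M.Indep I ∧ I.card = k ∧ x = incVec I}

/-- the cardinality constrained matroid polytope P^c(E) -/
noncomputable def cardPolytope (M : FinMatroid α) {m : ℕ} (c : Fin m → ℕ) : Set (α → ℝ) :=
  convexHull ℝ {x | ∃ I : Finset α, M.Indep I ∧ (∃ p : Fin m, I.card = c p) ∧ x = incVec I}

/-- dimension of (the affine hull of) a subset of ℝ^E -/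
noncomputable def polyDim (s : Set (α → ℝ)) : ℕ :=
  Module.finrank ℝ (affineSpan ℝ s).direction

/-- `a · x ≤ a₀` defines a facet of `P` -/
noncomputable def IsFacet (P : Set (α → ℝ)) (a : α → ℝ) (a₀ : ℝ) : Prop :=
  (∀ x ∈ P, ∑ e, a e * x e ≤ a₀) ∧
  polyDim {x ∈ P | ∑ e, a e * x e = a₀} + 1 = polyDim P

/-!
The truncation `I ↦ M.Indep I ∧ I.card ≤ k` is again a matroid, with rank `min (r F) k`, so the
theorem is Edmonds' description of the matroid polytope `{x ≥ 0 | x(F) ≤ r(F) for all F}` applied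
to it. For Edmonds' theorem it suffices, by Krein–Milman, to show that every extreme point `x` is
integral. Tight sets are closed under `∪` and `∩` by submodularity of the rank. If `x f` were
fractional, one finds a direction `d` (`e_f`, or `e_f - e_g` for a second fractional coordinate
`g` lying in exactly the same tight sets as `f`) along which `x ± t d` stays in the polytope for
small `t`, contradicting extremality.
-/

open Filter Topology

section Rank

variable {E : Type*} {Indep : Finset E → Prop}

open Classical in
noncomputable def rkOf (Indep : Finset E → Prop) (F : Finset E) : ℕ :=
  (F.powerset.filter Indep).sup card

theorem card_le_rkOf {I F : Finset E} (hI : Indep I) (hIF : I ⊆ F) : I.card ≤ rkOf Indep F := by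
  classical
  exact le_sup (mem_filter.2 ⟨mem_powerset.2 hIF, hI⟩)

theorem rkOf_le_iff {F : Finset E} {n : ℕ} :
    rkOf Indep F ≤ n ↔ ∀ I ⊆ F, Indep I → I.card ≤ n := by
  simp [rkOf, and_imp]

theorem rkOf_le_card (F : Finset E) : rkOf Indep F ≤ F.card :=
  rkOf_le_iff.2 fun _ hIF _ => card_le_card hIF

theorem exists_subset_indep_card_eq_rkOf (hempty : Indep ∅) (F : Finset E) :
    ∃ I ⊆ F, Indep I ∧ I.card = rkOf Indep F := by
  classical
  obtain ⟨I, hI, hcard⟩ := exists_mem_eq_sup (F.powerset.filter Indep)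
    ⟨∅, mem_filter.2 ⟨empty_mem_powerset F, hempty⟩⟩ card
  rw [mem_filter, mem_powerset] at hI
  exact ⟨I, hI.1, hI.2, hcard.symm⟩

theorem indep_of_card_le_rkOf (hempty : Indep ∅) {I : Finset E} (hI : I.card ≤ rkOf Indep I) :
    Indep I := by
  obtain ⟨J, hJI, hJ, hcard⟩ := exists_subset_indep_card_eq_rkOf hempty I
  rwa [eq_of_subset_of_card_le hJI (hcard ▸ hI)] at hJ

theorem rkOf_truncate (hempty : Indep ∅)
    (hsubset : ∀ ⦃I J : Finset E⦄, Indep J → I ⊆ J → Indep I) (k : ℕ) (F : Finset E) :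
    rkOf (fun I => Indep I ∧ I.card ≤ k) F = min (rkOf Indep F) k := by
  refine le_antisymm (rkOf_le_iff.2 fun I hIF hI => le_min (card_le_rkOf hI.1 hIF) hI.2) ?_
  obtain ⟨I, hIF, hI, hcard⟩ := exists_subset_indep_card_eq_rkOf hempty F
  obtain ⟨J, hJI, hJcard⟩ := exists_subset_card_eq (show min (rkOf Indep F) k ≤ I.card by omega)
  rw [← hJcard]
  exact card_le_rkOf ⟨hsubset hI hJI, by omega⟩ (hJI.trans hIF)

variable [DecidableEq E]

/-- Unlike `FinMatroid`, loops are allowed, so that truncations `I ↦ Indep I ∧ I.card ≤ k`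
are covered for every `k` (for `k = 0` every element is a loop). -/
structure IsMatroidIndep (Indep : Finset E → Prop) : Prop where
  empty : Indep ∅
  subset : ∀ ⦃I J : Finset E⦄, Indep J → I ⊆ J → Indep I
  exchange : ∀ ⦃I J : Finset E⦄, Indep I → Indep J → I.card < J.card →
    ∃ e ∈ J \ I, Indep (insert e I)

theorem IsMatroidIndep.truncate (h : IsMatroidIndep Indep) (k : ℕ) :
    IsMatroidIndep fun I => Indep I ∧ I.card ≤ k where
  empty := ⟨h.empty, by simp⟩
  subset _ _ hJ hIJ := ⟨h.subset hJ.1 hIJ, (card_le_card hIJ).trans hJ.2⟩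
  exchange I J hI hJ hlt := by
    obtain ⟨e, he, heI⟩ := h.exchange hI.1 hJ.1 hlt
    exact ⟨e, he, heI, (card_insert_le e I).trans (by omega)⟩

noncomputable def IsMatroidIndep.toMatroid (h : IsMatroidIndep Indep) : Matroid E :=
  (IndepMatroid.ofFinset Set.univ Indep h.empty h.subset
    (fun _ _ hI hJ hlt => by
      obtain ⟨e, he, heI⟩ := h.exchange hI hJ hlt
      exact ⟨e, (mem_sdiff.1 he).1, (mem_sdiff.1 he).2, heI⟩)
    fun _ _ => Set.subset_univ _).matroid

theorem IsMatroidIndep.toMatroid_indep (h : IsMatroidIndep Indep) (I : Finset E) :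
    h.toMatroid.Indep I ↔ Indep I := by
  simp [IsMatroidIndep.toMatroid]

theorem IsMatroidIndep.eRk_toMatroid (h : IsMatroidIndep Indep) (F : Finset E) :
    h.toMatroid.eRk F = rkOf Indep F := by
  refine le_antisymm (Matroid.eRk_le_iff.2 fun I hIF hI => ?_) ?_
  · lift I to Finset E using F.finite_toSet.subset hIF
    rw [Set.encard_coe_eq_coe_finsetCard, Nat.cast_le]
    exact card_le_rkOf ((h.toMatroid_indep I).1 hI) (coe_subset.1 hIF)
  · obtain ⟨I, hIF, hI, hcard⟩ := exists_subset_indep_card_eq_rkOf h.empty F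
    rw [← hcard, ← Set.encard_coe_eq_coe_finsetCard]
    exact ((h.toMatroid_indep I).2 hI).encard_le_eRk_of_subset (coe_subset.2 hIF)

theorem IsMatroidIndep.rkOf_inter_add_rkOf_union_le (h : IsMatroidIndep Indep) (A B : Finset E) :
    rkOf Indep (A ∩ B) + rkOf Indep (A ∪ B) ≤ rkOf Indep A + rkOf Indep B := by
  have := h.toMatroid.eRk_inter_add_eRk_union_le A B
  rw [← coe_inter, ← coe_union, h.eRk_toMatroid, h.eRk_toMatroid, h.eRk_toMatroid,
    h.eRk_toMatroid] at this
  exact_mod_cast this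

end Rank

theorem FinMatroid.isMatroidIndep (M : FinMatroid α) : IsMatroidIndep M.Indep :=
  ⟨M.empty_indep, M.subset_indep, M.exchange⟩

theorem FinMatroid.r_eq_rkOf (M : FinMatroid α) : M.r = rkOf M.Indep := rfl

theorem AddSubgroup.exists_ne_notMem_of_sum_mem {ι G : Type*} [AddCommGroup G] [DecidableEq ι]
    (H : AddSubgroup G) {s : Finset ι} {v : ι → G} {i : ι} (hs : ∑ j ∈ s, v j ∈ H) (hi : i ∈ s)
    (hvi : v i ∉ H) : ∃ j ∈ s, j ≠ i ∧ v j ∉ H := by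
  by_contra! hall
  rw [← add_sum_erase s v hi] at hs
  exact hvi ((H.add_mem_cancel_right
    (H.sum_mem fun j hj => hall j (mem_of_mem_erase hj) (ne_of_mem_erase hj))).1 hs)

theorem eventually_add_mul_le {a b c : ℝ} (h : a ≤ c) (hb : a = c → b = 0) :
    ∀ᶠ t in 𝓝 0, a + t * b ≤ c := by
  rcases h.lt_or_eq with h | h
  · have : Tendsto (fun t => a + t * b) (𝓝 0) (𝓝 a) :=
      (by fun_prop : Continuous fun t : ℝ => a + t * b).tendsto' 0 a (by simp)
    exact (this.eventually (eventually_lt_nhds h)).mono fun _ => le_of_lt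
  · simp [hb h, h]

theorem eventually_le_add_mul {a b c : ℝ} (h : c ≤ a) (hb : a = c → b = 0) :
    ∀ᶠ t in 𝓝 0, c ≤ a + t * b := by
  refine (eventually_add_mul_le (b := -b) (neg_le_neg h) fun h' => ?_).mono fun t ht => ?_
  · simp [hb (neg_inj.1 h')]
  · linarith

theorem eq_zero_of_mem_extremePoints_of_eventually {V : Type*} [AddCommGroup V] [Module ℝ V]
    {s : Set V} {x d : V} (hx : x ∈ s.extremePoints ℝ) (hd : ∀ᶠ t in 𝓝 (0 : ℝ), x + t • d ∈ s) :
    d = 0 := by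
  have hd' : ∀ᶠ t in 𝓝 (0 : ℝ), x + (-t) • d ∈ s :=
    (continuous_neg.tendsto' 0 0 neg_zero).eventually hd
  obtain ⟨t, ⟨hpos, hneg⟩, ht⟩ :=
    (((hd.and hd').filter_mono (nhdsWithin_le_nhds (s := {0}ᶜ))).and self_mem_nhdsWithin).exists
  have hseg : x ∈ openSegment ℝ (x + t • d) (x + (-t) • d) :=
    ⟨1 / 2, 1 / 2, by norm_num, by norm_num, by norm_num, by module⟩
  have htd : t • d = 0 := by simpa using hx.2 hpos hneg hseg
  exact (smul_eq_zero.1 htd).resolve_left ht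

section Polytope

variable {E : Type*} {Indep : Finset E → Prop} {x d : E → ℝ}

def matroidPolytope (Indep : Finset E → Prop) : Set (E → ℝ) :=
  {x | (∀ F, fsum x F ≤ rkOf Indep F) ∧ ∀ e, 0 ≤ x e}

def IsTight (Indep : Finset E → Prop) (x : E → ℝ) (F : Finset E) : Prop :=
  fsum x F = rkOf Indep F

theorem fsum_add_smul (t : ℝ) (F : Finset E) : fsum (x + t • d) F = fsum x F + t * fsum d F := by
  simp [fsum, sum_add_distrib, mul_sum]

theorem convex_matroidPolytope : Convex ℝ (matroidPolytope Indep) := by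
  intro x hx y hy a b ha hb hab
  refine ⟨fun F => ?_, fun e => ?_⟩
  · have : fsum (a • x + b • y) F = a * fsum x F + b * fsum y F := by
      simp [fsum, sum_add_distrib, mul_sum]
    rw [this]
    nlinarith [hx.1 F, hy.1 F]
  · simpa using add_nonneg (mul_nonneg ha (hx.2 e)) (mul_nonneg hb (hy.2 e))

theorem le_one_of_mem_matroidPolytope (hx : x ∈ matroidPolytope Indep) (e : E) : x e ≤ 1 := by
  have := (hx.1 {e}).trans (Nat.cast_le.2 (rkOf_le_card {e}))
  simpa [fsum] using this

theorem isCompact_matroidPolytope : IsCompact (matroidPolytope Indep) := by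
  have hclosed : IsClosed (matroidPolytope Indep) := by
    simp only [matroidPolytope, fsum, Set.ofPred_and, Set.ofPred_forall]
    exact (isClosed_iInter fun F => isClosed_le (by fun_prop) continuous_const).inter
      (isClosed_iInter fun e => isClosed_le continuous_const (continuous_apply e))
  exact isCompact_Icc.of_isClosed_subset hclosed
    fun x hx => ⟨hx.2, le_one_of_mem_matroidPolytope hx⟩

theorem isTight_empty : IsTight Indep x ∅ := by
  simp [IsTight, fsum, Nat.le_zero.1 (rkOf_le_card (Indep := Indep) ∅)]

theorem fsum_incVec [DecidableEq E] (I F : Finset E) : fsum (incVec I) F = (F ∩ I).card := by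
  simp only [fsum, incVec]
  rw [sum_boole, filter_mem_eq_inter]

theorem incVec_mem_matroidPolytope [DecidableEq E]
    (hsubset : ∀ ⦃I J : Finset E⦄, Indep J → I ⊆ J → Indep I) {I : Finset E} (hI : Indep I) :
    incVec I ∈ matroidPolytope Indep := by
  refine ⟨fun F => ?_, fun e => ?_⟩
  · rw [fsum_incVec]
    exact_mod_cast card_le_rkOf (hsubset hI inter_subset_right) inter_subset_left
  · unfold incVec
    positivity

theorem IsMatroidIndep.isTight_inter_union [DecidableEq E] (h : IsMatroidIndep Indep)
    (hx : x ∈ matroidPolytope Indep) {A B : Finset E} (hA : IsTight Indep x A)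
    (hB : IsTight Indep x B) : IsTight Indep x (A ∩ B) ∧ IsTight Indep x (A ∪ B) := by
  have hsubmod : (rkOf Indep (A ∩ B) : ℝ) + rkOf Indep (A ∪ B) ≤ rkOf Indep A + rkOf Indep B := by
    exact_mod_cast h.rkOf_inter_add_rkOf_union_le A B
  have hsum : fsum x (A ∩ B) + fsum x (A ∪ B) = fsum x A + fsum x B := by
    rw [add_comm]
    exact sum_union_inter
  unfold IsTight at *
  constructor <;> linarith [hx.1 (A ∩ B), hx.1 (A ∪ B)]

variable [Fintype E]

theorem eventually_add_smul_mem_matroidPolytope (hx : x ∈ matroidPolytope Indep)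
    (hd : ∀ F, IsTight Indep x F → fsum d F = 0) (hd' : ∀ e, x e = 0 → d e = 0) :
    ∀ᶠ t in 𝓝 (0 : ℝ), x + t • d ∈ matroidPolytope Indep := by
  refine (eventually_all.2 fun F => ?_).and (eventually_all.2 fun e => ?_)
  · simpa only [fsum_add_smul] using eventually_add_mul_le (hx.1 F) (hd F)
  · simpa using eventually_le_add_mul (hx.2 e) fun h => hd' e h

theorem eq_zero_of_mem_extremePoints_matroidPolytope
    (hx : x ∈ (matroidPolytope Indep).extremePoints ℝ)
    (hd : ∀ F, IsTight Indep x F → fsum d F = 0) (hd' : ∀ e, x e = 0 → d e = 0) : d = 0 :=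
  eq_zero_of_mem_extremePoints_of_eventually hx
    (eventually_add_smul_mem_matroidPolytope hx.1 hd hd')

theorem matroidPolytope_truncate (hempty : Indep ∅)
    (hsubset : ∀ ⦃I J : Finset E⦄, Indep J → I ⊆ J → Indep I) (k : ℕ) :
    matroidPolytope (fun I => Indep I ∧ I.card ≤ k) =
      {x | (∀ F, F ≠ ∅ → fsum x F ≤ rkOf Indep F) ∧ fsum x univ ≤ k ∧ ∀ e, 0 ≤ x e} := by
  ext x
  simp only [matroidPolytope, Set.mem_ofPred_eq, rkOf_truncate hempty hsubset, Nat.cast_min,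
    le_min_iff]
  refine ⟨fun ⟨hF, hx0⟩ => ⟨fun F _ => (hF F).1, (hF univ).2, hx0⟩,
    fun ⟨hF, huniv, hx0⟩ => ⟨fun F => ⟨?_, ?_⟩, hx0⟩⟩
  · rcases eq_or_ne F ∅ with rfl | hne
    · simp [fsum]
    · exact hF F hne
  · exact (sum_le_sum_of_subset_of_nonneg (subset_univ F) fun e _ _ => hx0 e).trans huniv

variable [DecidableEq E]

/-- If `x f` is fractional and `f` lies in a tight set, let `D` be the intersection of the tight
sets containing `f` and `U` the union of those avoiding it; both are tight, so `x (D \ U)` is an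
integer and `D \ U` holds a second fractional coordinate `g`, which lies in the same tight sets
as `f`. -/
theorem IsMatroidIndep.exists_not_int_forall_isTight_mem_iff (h : IsMatroidIndep Indep)
    (hx : x ∈ matroidPolytope Indep) {f : E} (hf : x f ∉ (Int.castAddHom ℝ).range)
    (hfF : ∃ F, IsTight Indep x F ∧ f ∈ F) :
    ∃ g ≠ f, x g ∉ (Int.castAddHom ℝ).range ∧ ∀ F, IsTight Indep x F → (f ∈ F ↔ g ∈ F) := by
  classical
  obtain ⟨F₀, hF₀, hfF₀⟩ := hfF
  set S := univ.filter fun F => IsTight Indep x F ∧ f ∈ F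
  have hS : S.Nonempty := ⟨F₀, by simp [S, hF₀, hfF₀]⟩
  set D := S.inf' hS id
  set U := (univ.filter fun F => IsTight Indep x F ∧ f ∉ F).sup id
  have hD : IsTight Indep x D :=
    inf'_induction hS id (fun _ hA _ hB => (h.isTight_inter_union hx hA hB).1)
      fun F hF => (mem_filter.1 hF).2.1
  have hU : IsTight Indep x U :=
    sup_induction isTight_empty (fun _ hA _ hB => (h.isTight_inter_union hx hA hB).2)
      fun F hF => (mem_filter.1 hF).2.1
  have hDsub : ∀ F, IsTight Indep x F → f ∈ F → D ⊆ F := fun F hF hfF =>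
    inf'_le id (mem_filter.2 ⟨mem_univ F, hF, hfF⟩)
  have hsubU : ∀ F, IsTight Indep x F → f ∉ F → F ⊆ U := fun F hF hfF =>
    le_sup (f := id) (mem_filter.2 ⟨mem_univ F, hF, hfF⟩)
  have hfD : f ∈ D := (mem_inf' hS).2 fun F hF => (mem_filter.1 hF).2.2
  have hfU : f ∉ U := by simp [U]
  have hint : ∑ e ∈ D \ U, x e ∈ (Int.castAddHom ℝ).range := by
    refine ⟨rkOf Indep D - rkOf Indep (D ∩ U), ?_⟩
    have hDU := (h.isTight_inter_union hx hD hU).1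
    have hsplit := sum_inter_add_sum_sdiff D U x
    unfold IsTight fsum at hD hDU
    push_cast [Int.coe_castAddHom]
    linarith
  obtain ⟨g, hg, hgf, hgZ⟩ := AddSubgroup.exists_ne_notMem_of_sum_mem _ hint
    (mem_sdiff.2 ⟨hfD, hfU⟩) hf
  refine ⟨g, hgf, hgZ, fun F hF => ⟨fun hfF => hDsub F hF hfF (mem_sdiff.1 hg).1, fun hgF => ?_⟩⟩
  by_contra hfF
  exact (mem_sdiff.1 hg).2 (hsubU F hF hfF hgF)

theorem IsMatroidIndep.mem_intCast_range_of_mem_extremePoints (h : IsMatroidIndep Indep)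
    (hx : x ∈ (matroidPolytope Indep).extremePoints ℝ) (f : E) :
    x f ∈ (Int.castAddHom ℝ).range := by
  by_contra hf
  have hf0 : x f ≠ 0 := fun h0 => hf ⟨0, by simp [h0]⟩
  by_cases hfF : ∃ F, IsTight Indep x F ∧ f ∈ F
  · obtain ⟨g, hgf, hg, hfg⟩ := h.exists_not_int_forall_isTight_mem_iff hx.1 hf hfF
    have hg0 : x g ≠ 0 := fun h0 => hg ⟨0, by simp [h0]⟩
    have hd := eq_zero_of_mem_extremePoints_matroidPolytope hx
      (d := Pi.single f 1 - Pi.single g 1) (fun F hF => by simp [fsum, sum_sub_distrib, hfg F hF])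
      fun e he => by
        have hef : e ≠ f := by rintro rfl; exact hf0 he
        have heg : e ≠ g := by rintro rfl; exact hg0 he
        simp [hef, heg]
    simpa [hgf.symm] using congrFun hd f
  · have hd := eq_zero_of_mem_extremePoints_matroidPolytope hx (d := Pi.single f 1)
      (fun F hF => by
        have hfF' : f ∉ F := fun hfF' => hfF ⟨F, hF, hfF'⟩
        simp [fsum, hfF'])
      fun e he => by
        have hef : e ≠ f := by rintro rfl; exact hf0 he
        simp [hef]
    simpa using congrFun hd f

theorem IsMatroidIndep.exists_indep_eq_incVec_of_mem_extremePoints (h : IsMatroidIndep Indep)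
    (hx : x ∈ (matroidPolytope Indep).extremePoints ℝ) : ∃ I, Indep I ∧ x = incVec I := by
  have h01 : ∀ e, x e = 0 ∨ x e = 1 := by
    intro e
    obtain ⟨n, hn⟩ := h.mem_intCast_range_of_mem_extremePoints hx e
    have h0 := hx.1.2 e
    have h1 := le_one_of_mem_matroidPolytope hx.1 e
    simp only [Int.coe_castAddHom] at hn
    rw [← hn] at h0 h1 ⊢
    norm_cast at *
    omega
  set I := univ.filter fun e => x e = 1
  have hxI : x = incVec I := funext fun e => by rcases h01 e with he | he <;> simp [incVec, I, he]
  refine ⟨I, indep_of_card_le_rkOf h.empty ?_, hxI⟩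
  have := hx.1.1 I
  rw [hxI, fsum_incVec, inter_self] at this
  exact_mod_cast this

theorem IsMatroidIndep.convexHull_incVec_eq_matroidPolytope (h : IsMatroidIndep Indep) :
    convexHull ℝ {x | ∃ I, Indep I ∧ x = incVec I} = matroidPolytope Indep := by
  set S := {x | ∃ I, Indep I ∧ x = incVec I}
  refine (convexHull_min ?_ convex_matroidPolytope).antisymm ?_
  · rintro _ ⟨I, hI, rfl⟩
    exact incVec_mem_matroidPolytope h.subset hI
  · have hS : S.Finite := (Set.finite_range incVec).subset fun _ ⟨I, _, hI⟩ => ⟨I, hI.symm⟩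
    calc matroidPolytope Indep
        = closure (convexHull ℝ ((matroidPolytope Indep).extremePoints ℝ)) :=
          (closure_convexHull_extremePoints isCompact_matroidPolytope
            convex_matroidPolytope).symm
      _ ⊆ closure (convexHull ℝ S) :=
          closure_mono <| convexHull_mono fun _ hx =>
            h.exists_indep_eq_incVec_of_mem_extremePoints hx
      _ = convexHull ℝ S := (hS.isCompact_convexHull ℝ).isClosed.closure_eq

end Polytope

/-- linear description of the polytope of independent sets of
cardinality at most k. -/
theorem truncation_polytope_eq {α : Type*} [Fintype α] [DecidableEq α]
    (M : FinMatroid α) (k : ℕ) :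
    convexHull ℝ {x : α → ℝ | ∃ I : Finset α, M.Indep I ∧ I.card ≤ k ∧ x = incVec I} =
      {x : α → ℝ | (∀ F : Finset α, F ≠ ∅ → fsum x F ≤ (M.r F : ℝ)) ∧
        fsum x Finset.univ ≤ (k : ℝ) ∧ (∀ e : α, 0 ≤ x e)} := by
  have := (M.isMatroidIndep.truncate k).convexHull_incVec_eq_matroidPolytope
  rw [matroidPolytope_truncate M.empty_indep M.subset_indep, ← M.r_eq_rkOf] at this
  simpa only [and_assoc] using this
end

section
/- Let k be a natural number with 0 < k ≤ r(E) and let ∅ ≠ F ⊆ E. Consider the family T of independent sets I of M with |I| = k that satisfy the inequality x(F) ≥ r^k(F) at equality, i.e., |I ∩ F| = r^k(F). Then the restrictions to the coordinates in F of the incidence vectors {χ^I : I ∈ T} span the full space ℝ^F (equivalently, the matrix A_F whose rows are these restrictions has rank |F|) if and only if r^k(F) ≥ 1, E∖F is closed, and (F is k-inseparable or k < r(E)). -/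
/-!
Spanning fails exactly when a nonzero weight `a ∈ ℝ^F` satisfies `a(I ∩ F) = 0` for every tight
set `I`, i.e. every independent `k`-set meeting `Fᶜ` in a basis of `Fᶜ`. Each failing condition
produces such a weight: if `r^k(F) ≤ 0` no tight set meets `F`; an element of `F` spanned by `Fᶜ`
lies in no tight set; and a `k`-separation `F = F₁ ∪ F₂` forces `|I ∩ Fᵢ| = r^k(Fᵢ)`, so
`r^k(F₂) χ^F₁ - r^k(F₁) χ^F₂` works.

Conversely, exchanging an element of `I ∩ F` for one of `F ∖ I` within the tight sets shows that a
vanishing weight takes equal values on the two elements. If `k < r(E)`, any two elements of `F`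
can be exchanged in this way (inside a tight set enlarged by one element, or by parallelism over
a basis of `Fᶜ`). If `k = r(E)`, every union `G` of level sets of `a` has
`r(Fᶜ ∪ G) = r(Fᶜ) + |I ∩ G|`, so two level sets would `k`-separate `F`. Either way `a` is
constant on `F`, and its sum over the `r^k(F) ≥ 1` elements of `I ∩ F` forces it to vanish.
-/

open Finset

variable {α : Type*} [Fintype α] [DecidableEq α]

theorem Submodule.span_eq_top_iff_forall_dotProduct_eq_zero {K ι : Type*} [Field K] [Fintype ι]
    [DecidableEq ι] (S : Set (ι → K)) :
    Submodule.span K S = ⊤ ↔ ∀ b : ι → K, (∀ y ∈ S, b ⬝ᵥ y = 0) → b = 0 := by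
  rw [← Submodule.dualAnnihilator_eq_bot_iff, Submodule.eq_bot_iff,
    ← (dotProductEquiv K ι).toEquiv.forall_congr_right]
  simp only [← SetLike.mem_coe, Submodule.coe_dualAnnihilator_span]
  simp [Set.subset_def]

lemma sum_mul_incVec_subtype {β : Type*} [DecidableEq β] (F : Finset β) (a : β → ℝ)
    (I : Finset β) :
    ∑ i : {e // e ∈ F}, a i * incVec I i = ∑ e ∈ I ∩ F, a e := by
  rw [univ_eq_attach, sum_attach F (fun e => a e * incVec I e), inter_comm, ← sum_ite_mem]
  simp only [incVec, mul_ite, mul_one, mul_zero]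

theorem span_incVec_restrict_eq_top_iff {β : Type*} [DecidableEq β] (F : Finset β)
    (P : Finset β → Prop) :
    Submodule.span ℝ {y : {e // e ∈ F} → ℝ | ∃ I, P I ∧ y = fun e => incVec I e.val} = ⊤ ↔
      ∀ a : β → ℝ, (∀ I, P I → ∑ e ∈ I ∩ F, a e = 0) → ∀ e ∈ F, a e = 0 := by
  rw [Submodule.span_eq_top_iff_forall_dotProduct_eq_zero]
  constructor
  · intro h a ha e he
    refine congrFun (h (fun i => a i.val) ?_) ⟨e, he⟩
    rintro _ ⟨I, hI, rfl⟩
    rw [dotProduct, sum_mul_incVec_subtype, ha I hI]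
  · intro h b hb
    set a : β → ℝ := fun e => if he : e ∈ F then b ⟨e, he⟩ else 0
    have hba : b = fun i => a i.val := funext fun i => by simp [a]
    funext i
    rw [hba]
    refine h a (fun I hI => ?_) i i.2
    rw [← sum_mul_incVec_subtype, ← dotProduct, ← hba]
    exact hb _ ⟨I, hI, rfl⟩

namespace FinMatroid

variable {M : FinMatroid α} {A B I J X : Finset α} {e f : α}

open Classical in
lemma card_le_r (hI : M.Indep I) (hIA : I ⊆ A) : I.card ≤ M.r A :=
  le_sup (by simp [hI, hIA])

open Classical in
lemma exists_basis (M : FinMatroid α) (A : Finset α) :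
    ∃ B ⊆ A, M.Indep B ∧ B.card = M.r A := by
  obtain ⟨B, hB, hBc⟩ := exists_mem_eq_sup (A.powerset.filter M.Indep)
    ⟨∅, by simp [M.empty_indep]⟩ card
  simp only [mem_filter, mem_powerset] at hB
  exact ⟨B, hB.1, hB.2, hBc.symm⟩

lemma r_mono (h : A ⊆ B) : M.r A ≤ M.r B := by
  obtain ⟨C, hCA, hC, hCc⟩ := M.exists_basis A
  exact hCc ▸ card_le_r hC (hCA.trans h)

lemma r_le_card (M : FinMatroid α) (A : Finset α) : M.r A ≤ A.card := by
  obtain ⟨C, hCA, -, hCc⟩ := M.exists_basis A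
  exact hCc ▸ card_le_card hCA

lemma r_eq_card_of_indep (hI : M.Indep I) : M.r I = I.card :=
  le_antisymm (M.r_le_card I) (card_le_r hI subset_rfl)

lemma indep_of_card_le_r (h : A.card ≤ M.r A) : M.Indep A := by
  obtain ⟨C, hCA, hC, hCc⟩ := M.exists_basis A
  exact eq_of_subset_of_card_le hCA (hCc ▸ h) ▸ hC

lemma exists_indep_superset_card_eq (hI : M.Indep I) (hIA : I ⊆ A) {n : ℕ}
    (hIn : I.card ≤ n) (hnA : n ≤ M.r A) : ∃ J, I ⊆ J ∧ J ⊆ A ∧ M.Indep J ∧ J.card = n := by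
  induction h : n - I.card generalizing I with
  | zero => exact ⟨I, subset_rfl, hIA, hI, by omega⟩
  | succ d ih =>
    obtain ⟨C, hCA, hC, hCc⟩ := M.exists_basis A
    obtain ⟨e, he, hIe⟩ := M.exchange hI hC (by omega)
    rw [mem_sdiff] at he
    obtain ⟨J, hIJ, hJA, hJ, hJc⟩ := ih hIe (insert_subset (hCA he.1) hIA)
      (by rw [card_insert_of_notMem he.2]; omega) (by rw [card_insert_of_notMem he.2]; omega)
    exact ⟨J, (subset_insert _ _).trans hIJ, hJA, hJ, hJc⟩

lemma r_insert_le (M : FinMatroid α) (A : Finset α) (e : α) :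
    M.r (insert e A) ≤ M.r A + 1 := by
  obtain ⟨C, hCA, hC, hCc⟩ := M.exists_basis (insert e A)
  have hCe : (C.erase e).card ≤ M.r A :=
    card_le_r (M.subset_indep hC (erase_subset _ _))
      ((erase_subset_erase e hCA).trans (erase_insert_subset e A))
  have := pred_card_le_card_erase (s := C) (a := e)
  omega

lemma r_union_add_r_inter_le (M : FinMatroid α) (A B : Finset α) :
    M.r (A ∪ B) + M.r (A ∩ B) ≤ M.r A + M.r B := by
  obtain ⟨X, hXAB, hX, hXc⟩ := M.exists_basis (A ∩ B)
  obtain ⟨Y, hXY, hYAB, hY, hYc⟩ := exists_indep_superset_card_eq hX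
    (hXAB.trans inter_subset_union) (card_le_r hX (hXAB.trans inter_subset_union)) le_rfl
  have hYA : (Y ∩ A).card ≤ M.r A := card_le_r (M.subset_indep hY inter_subset_left)
    inter_subset_right
  have hYB : (Y ∩ B).card ≤ M.r B := card_le_r (M.subset_indep hY inter_subset_left)
    inter_subset_right
  have hunion : Y ∩ A ∪ Y ∩ B = Y := by rw [← inter_union_distrib_left, inter_eq_left.2 hYAB]
  have hinter : Y ∩ A ∩ (Y ∩ B) = Y ∩ (A ∩ B) := by ext; simp only [mem_inter]; tauto
  have hcard := card_union_add_card_inter (Y ∩ A) (Y ∩ B)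
  rw [hunion, hinter] at hcard
  have := card_le_card (subset_inter hXY hXAB)
  omega

lemma r_insert_eq_of_subset (h : M.r (insert e A) = M.r A) (hAB : A ⊆ B) :
    M.r (insert e B) = M.r B := by
  have hsub := M.r_union_add_r_inter_le (insert e A) B
  rw [insert_union, union_eq_right.2 hAB] at hsub
  have := r_mono (M := M) (subset_inter (subset_insert e A) hAB)
  have := r_mono (M := M) (subset_insert e B)
  omega

lemma r_le_of_forall_r_insert_eq (h : ∀ x ∈ X, M.r (insert x A) = M.r A) : M.r X ≤ M.r A := by
  suffices M.r (A ∪ X) = M.r A from this ▸ r_mono subset_union_right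
  induction X using Finset.induction with
  | empty => simp
  | insert x X hx ih =>
    rw [union_insert, r_insert_eq_of_subset (h x (mem_insert_self x X)) subset_union_left,
      ih fun y hy => h y (mem_insert_of_mem hy)]

lemma r_insert_eq_of_not_indep (hI : M.Indep I) (h : ¬ M.Indep (insert e I)) :
    M.r (insert e I) = M.r I := by
  refine le_antisymm ?_ (r_mono (subset_insert e I))
  have hlt : M.r (insert e I) < (insert e I).card :=
    lt_of_not_ge fun hle => h (indep_of_card_le_r hle)
  rw [r_eq_card_of_indep hI]
  exact Nat.lt_succ_iff.1 (hlt.trans_le (card_insert_le e I))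

lemma indep_insert_of_closedSet (hA : M.ClosedSet A) (hBA : B ⊆ A) (hB : M.Indep B)
    (hBc : B.card = M.r A) (he : e ∉ A) : M.Indep (insert e B) := by
  obtain ⟨C, hC, hCi, hCc⟩ := M.exists_basis (insert e A)
  obtain ⟨x, hx, hBx⟩ := M.exchange hB hCi (by have := hA e he; omega)
  rw [mem_sdiff] at hx
  rcases mem_insert.1 (hC hx.1) with rfl | hxA
  · exact hBx
  · have := card_le_r hBx (insert_subset hxA hBA)
    rw [card_insert_of_notMem hx.2] at this
    omega

lemma indep_insert_erase_of_not_indep (hJ : M.Indep J) (he : e ∈ J)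
    (hXJ : X ⊆ J.erase e) (hX : M.Indep (insert f X)) (hXe : ¬ M.Indep (insert e (insert f X))) :
    M.Indep (insert f (J.erase e)) := by
  have hspan : M.r (insert e (insert f (J.erase e))) = M.r (insert f (J.erase e)) :=
    r_insert_eq_of_subset (r_insert_eq_of_not_indep hX hXe) (insert_subset_insert f hXJ)
  have hJsub : J ⊆ insert e (insert f (J.erase e)) := by
    rw [insert_comm, insert_erase he]
    exact subset_insert f J
  apply indep_of_card_le_r
  calc (insert f (J.erase e)).card
      ≤ (J.erase e).card + 1 := card_insert_le f _
    _ = J.card := card_erase_add_one he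
    _ = M.r J := (r_eq_card_of_indep hJ).symm
    _ ≤ M.r (insert f (J.erase e)) := hspan ▸ r_mono hJsub

lemma exists_indep_insert_erase (hI : M.Indep I) (hfI : f ∉ I) (hr : M.r (insert f I) ≤ I.card)
    (hX : M.Indep (insert f X)) (hXI : X ⊆ I) :
    ∃ e ∈ I, e ∉ X ∧ M.Indep (insert f (I.erase e)) := by
  have hXfI : insert f X ⊆ insert f I := insert_subset_insert f hXI
  obtain ⟨J, hXJ, hJI, hJ, hJc⟩ := exists_indep_superset_card_eq hX hXfI
    ((card_le_r hX hXfI).trans hr) (card_le_r hI (subset_insert f I))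
  obtain ⟨e, heI, heJ⟩ : ∃ e ∈ I, e ∉ J := by
    by_contra! h
    have := card_le_card (insert_subset (hXJ (mem_insert_self f X)) h)
    rw [card_insert_of_notMem hfI] at this
    omega
  refine ⟨e, heI, fun heX => heJ (hXJ (mem_insert_of_mem heX)), ?_⟩
  have hJe : J ⊆ insert f (I.erase e) := fun x hx => by
    rcases mem_insert.1 (hJI hx) with rfl | hxI
    · exact mem_insert_self x _
    · exact mem_insert_of_mem (mem_erase.2 ⟨ne_of_mem_of_not_mem hx heJ, hxI⟩)
  have hcard : (insert f (I.erase e)).card ≤ J.card := by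
    rw [hJc, ← card_erase_add_one heI]
    exact card_insert_le f _
  exact eq_of_subset_of_card_le hJe hcard ▸ hJ

end FinMatroid

lemma card_inter_union_of_disjoint {β : Type*} [DecidableEq β] {X Y : Finset β} (I : Finset β)
    (h : Disjoint X Y) : (I ∩ (X ∪ Y)).card = (I ∩ X).card + (I ∩ Y).card := by
  rw [inter_union_distrib_left,
    card_union_of_disjoint (h.mono inter_subset_right inter_subset_right)]

lemma card_inter_add_card_inter_compl (I F : Finset α) :
    (I ∩ F).card + (I ∩ Fᶜ).card = I.card := by
  rw [← sdiff_eq_inter_compl, card_inter_add_card_sdiff]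

namespace FinMatroid

def IsTight (M : FinMatroid α) (k : ℕ) (F I : Finset α) : Prop :=
  M.Indep I ∧ I.card = k ∧ (I ∩ Fᶜ).card = M.r Fᶜ

def VanishesOnTight (M : FinMatroid α) (k : ℕ) (F : Finset α) (a : α → ℝ) : Prop :=
  ∀ I, M.IsTight k F I → ∑ e ∈ I ∩ F, a e = 0

variable {M : FinMatroid α} {k : ℕ} {B F G I : Finset α} {e f : α} {a : α → ℝ}

lemma krank_le_card_inter (hI : M.Indep I) (hIk : I.card = k) (X : Finset α) :
    M.krank k X ≤ (I ∩ X).card := by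
  have := card_le_r (M.subset_indep hI inter_subset_left) (inter_subset_right (s₁ := I) (s₂ := Xᶜ))
  have := card_inter_add_card_inter_compl I X
  unfold krank
  omega

lemma isTight_iff_card_inter_eq_krank :
    M.IsTight k F I ↔ M.Indep I ∧ I.card = k ∧ ((I ∩ F).card : ℤ) = M.krank k F := by
  have := card_inter_add_card_inter_compl I F
  unfold IsTight krank
  constructor <;> rintro ⟨hI, hIk, h⟩ <;> exact ⟨hI, hIk, by omega⟩

lemma isTight_of_basis_subset (hI : M.Indep I) (hIk : I.card = k) (hBF : B ⊆ Fᶜ)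
    (hBc : B.card = M.r Fᶜ) (hBI : B ⊆ I) : M.IsTight k F I :=
  ⟨hI, hIk, le_antisymm (card_le_r (M.subset_indep hI inter_subset_left) inter_subset_right)
    (hBc ▸ card_le_card (subset_inter hBI hBF))⟩

lemma exists_isTight (hk : M.r Fᶜ ≤ k) (hkr : k ≤ M.r univ) : ∃ I, M.IsTight k F I := by
  obtain ⟨B, hBF, hB, hBc⟩ := M.exists_basis Fᶜ
  obtain ⟨I, hBI, -, hI, hIk⟩ := exists_indep_superset_card_eq hB (subset_univ B) (hBc ▸ hk) hkr
  exact ⟨I, isTight_of_basis_subset hI hIk hBF hBc hBI⟩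

lemma IsTight.insert_erase (hI : M.IsTight k F I) (he : e ∈ I) (heF : e ∈ F) (hf : f ∈ F)
    (hfI : f ∉ I) (hind : M.Indep (insert f (I.erase e))) :
    M.IsTight k F (insert f (I.erase e)) := by
  obtain ⟨-, hIk, hIF⟩ := hI
  refine ⟨hind, ?_, ?_⟩
  · rw [card_insert_of_notMem (fun h => hfI (mem_of_mem_erase h)), card_erase_add_one he, hIk]
  · rwa [insert_inter_of_notMem (by simpa using hf), erase_inter,
      erase_eq_of_notMem (by simp [heF])]

lemma VanishesOnTight.eq_of_exchange (ha : M.VanishesOnTight k F a) (hI : M.IsTight k F I)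
    (he : e ∈ I) (heF : e ∈ F) (hf : f ∈ F) (hfI : f ∉ I)
    (hind : M.Indep (insert f (I.erase e))) : a f = a e := by
  have hsum := ha _ (hI.insert_erase he heF hf hfI hind)
  rw [insert_inter_of_mem hf, erase_inter, sum_insert (by simp [hfI])] at hsum
  have := sum_erase_add (I ∩ F) a (mem_inter.2 ⟨he, heF⟩)
  linarith [ha I hI]

lemma vanishesOnTight_of_krank_nonpos (hk : M.krank k F ≤ 0) (a : α → ℝ) :
    M.VanishesOnTight k F a := by
  intro I hI
  have := (isTight_iff_card_inter_eq_krank.1 hI).2.2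
  rw [card_eq_zero.1 (show (I ∩ F).card = 0 by omega), sum_empty]

lemma vanishesOnTight_single (he : M.r (insert e Fᶜ) ≤ M.r Fᶜ) :
    M.VanishesOnTight k F (Pi.single e 1) := by
  rintro I ⟨hI, -, hIF⟩
  rw [sum_pi_single', if_neg]
  intro heIF
  obtain ⟨heI, heF⟩ := mem_inter.1 heIF
  have := card_le_r (M.subset_indep hI (insert_subset heI (inter_subset_left (s₂ := Fᶜ))))
    (insert_subset_insert e inter_subset_right)
  rw [card_insert_of_notMem (fun h => mem_compl.1 (mem_inter.1 h).2 heF), hIF] at this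
  omega

lemma exists_vanishesOnTight_ne_zero_of_kSeparable (hsep : M.kSeparable k F)
    (hk : 1 ≤ M.krank k F) : ∃ a, M.VanishesOnTight k F a ∧ ∃ e ∈ F, a e ≠ 0 := by
  obtain ⟨F₁, F₂, hF₁, hF₂, hdisj, rfl, hsum⟩ := hsep
  refine ⟨fun x => if x ∈ F₁ then (M.krank k F₂ : ℝ) else -(M.krank k F₁ : ℝ), ?_, ?_⟩
  · intro I hI
    obtain ⟨hI, hIk, hIF⟩ := isTight_iff_card_inter_eq_krank.1 hI
    have h₁ := krank_le_card_inter hI hIk F₁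
    have h₂ := krank_le_card_inter hI hIk F₂
    rw [card_inter_union_of_disjoint I hdisj] at hIF
    have hc₁ : ((I ∩ F₁).card : ℝ) = M.krank k F₁ := by
      exact_mod_cast (by omega : ((I ∩ F₁).card : ℤ) = _)
    have hc₂ : ((I ∩ F₂).card : ℝ) = M.krank k F₂ := by
      exact_mod_cast (by omega : ((I ∩ F₂).card : ℤ) = _)
    rw [inter_union_distrib_left, sum_union (hdisj.mono inter_subset_right inter_subset_right),
      sum_congr rfl fun x hx => if_pos (mem_inter.1 hx).2,
      sum_congr rfl fun x hx => if_neg (disjoint_right.1 hdisj (mem_inter.1 hx).2),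
      sum_const, sum_const, nsmul_eq_mul, nsmul_eq_mul, hc₁, hc₂]
    ring
  · by_cases h₂ : M.krank k F₂ = 0
    · obtain ⟨e, he⟩ := nonempty_iff_ne_empty.2 hF₂
      refine ⟨e, mem_union_right _ he, ?_⟩
      simp only [if_neg (disjoint_right.1 hdisj he), ne_eq, neg_eq_zero, Int.cast_eq_zero]
      omega
    · obtain ⟨e, he⟩ := nonempty_iff_ne_empty.2 hF₁
      exact ⟨e, mem_union_left _ he, by simpa [he] using h₂⟩

lemma VanishesOnTight.eq_of_lt_r_univ (ha : M.VanishesOnTight k F a) (hkF : M.r Fᶜ < k)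
    (hkr : k < M.r univ) (hcl : M.ClosedSet Fᶜ) (he : e ∈ F) (hf : f ∈ F) : a e = a f := by
  obtain rfl | hef := eq_or_ne e f
  · rfl
  obtain ⟨B, hBF, hB, hBc⟩ := M.exists_basis Fᶜ
  have heB : e ∉ B := fun h => mem_compl.1 (hBF h) he
  have hfB : f ∉ B := fun h => mem_compl.1 (hBF h) hf
  have hBe := indep_insert_of_closedSet hcl hBF hB hBc (by simpa using he)
  have hBf := indep_insert_of_closedSet hcl hBF hB hBc (by simpa using hf)
  by_cases hpair : M.Indep (insert f (insert e B))
  · -- extend `B + e + f` to an independent `(k+1)`-set `J`; then `J - f` and `J - e` are tight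
    obtain ⟨J, hBJ, -, hJ, hJc⟩ := exists_indep_superset_card_eq hpair (subset_univ _) (n := k + 1)
      (by rw [card_insert_of_notMem (by simp [hef.symm, hfB]), card_insert_of_notMem heB]; omega)
      (by omega)
    have hfJ : f ∈ J := hBJ (mem_insert_self _ _)
    have heJ : e ∈ J.erase f :=
      mem_erase.2 ⟨hef, hBJ (mem_insert_of_mem (mem_insert_self _ _))⟩
    have hI : M.IsTight k F (J.erase f) :=
      isTight_of_basis_subset (M.subset_indep hJ (erase_subset _ _))
        (by simp [card_erase_of_mem hfJ, hJc]) hBF hBc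
        fun x hx => mem_erase.2 ⟨ne_of_mem_of_not_mem hx hfB,
          hBJ (mem_insert_of_mem (mem_insert_of_mem hx))⟩
    have hswap : insert f ((J.erase f).erase e) = J.erase e := by
      rw [erase_right_comm, insert_erase (mem_erase.2 ⟨hef.symm, hfJ⟩)]
    exact (ha.eq_of_exchange hI heJ he hf (notMem_erase f J)
      (hswap ▸ M.subset_indep hJ (erase_subset _ _))).symm
  · -- `f` is parallel to `e` over `B`: swap `f` for `e` in a tight set containing `B + e`
    have hkf : k ≤ M.r (univ.erase f) := by
      have := M.r_insert_le (univ.erase f) f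
      rw [insert_erase (mem_univ f)] at this
      omega
    have hBuf : B ⊆ univ.erase f :=
      fun x hx => mem_erase.2 ⟨ne_of_mem_of_not_mem hx hfB, mem_univ x⟩
    obtain ⟨J, heBJ, hJf, hJ, hJc⟩ := exists_indep_superset_card_eq hBe
      (insert_subset (mem_erase.2 ⟨hef, mem_univ e⟩) hBuf)
      (by rw [card_insert_of_notMem heB]; omega) hkf
    have hI : M.IsTight k F J :=
      isTight_of_basis_subset hJ hJc hBF hBc ((subset_insert e B).trans heBJ)
    have heJ : e ∈ J := heBJ (mem_insert_self e B)
    have hBJ : B ⊆ J.erase e :=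
      fun x hx => mem_erase.2 ⟨ne_of_mem_of_not_mem hx heB, heBJ (mem_insert_of_mem hx)⟩
    exact (ha.eq_of_exchange hI heJ he hf (fun h => notMem_erase f univ (hJf h))
      (indep_insert_erase_of_not_indep hJ heJ hBJ hBf (by rwa [insert_comm]))).symm

lemma VanishesOnTight.not_indep_insert (ha : M.VanishesOnTight k F a) (hk : k = M.r univ)
    (hG : G ⊆ F) (hGlev : ∀ g ∈ G, ∀ h ∈ F, a h = a g → h ∈ G) (hI : M.IsTight k F I)
    (hfG : f ∈ G) (hfI : f ∉ I) : ¬ M.Indep (insert f (I ∩ Fᶜ ∪ I ∩ G)) := by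
  intro hW
  have hr : M.r (insert f I) ≤ I.card := hI.2.1 ▸ hk ▸ r_mono (subset_univ _)
  obtain ⟨e, heI, heW, hind⟩ := exists_indep_insert_erase hI.1 hfI hr hW
    (union_subset inter_subset_left inter_subset_left)
  have heF : e ∈ F := by
    by_contra h
    exact heW (mem_union_left _ (mem_inter.2 ⟨heI, mem_compl.2 h⟩))
  have hae := ha.eq_of_exchange hI heI heF (hG hfG) hfI hind
  exact heW (mem_union_right _ (mem_inter.2 ⟨heI, hGlev f hfG e heF hae.symm⟩))

lemma VanishesOnTight.r_compl_union_eq (ha : M.VanishesOnTight k F a) (hk : k = M.r univ)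
    (hG : G ⊆ F) (hGlev : ∀ g ∈ G, ∀ h ∈ F, a h = a g → h ∈ G) (hI : M.IsTight k F I) :
    M.r (Fᶜ ∪ G) = M.r Fᶜ + (I ∩ G).card := by
  set Y := I ∩ Fᶜ ∪ I ∩ G
  have hY : M.Indep Y := M.subset_indep hI.1 (union_subset inter_subset_left inter_subset_left)
  have hYc : Y.card = M.r Fᶜ + (I ∩ G).card := by
    rw [card_union_of_disjoint (disjoint_left.2 fun x hx hx' =>
      mem_compl.1 (mem_inter.1 hx).2 (hG (mem_inter.1 hx').2)), hI.2.2]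
  refine le_antisymm ?_ (hYc ▸ card_le_r hY (union_subset_union inter_subset_right
    inter_subset_right))
  rw [← hYc, ← r_eq_card_of_indep hY]
  refine r_le_of_forall_r_insert_eq fun z hz => ?_
  by_cases hzY : z ∈ Y
  · rw [insert_eq_of_mem hzY]
  refine r_insert_eq_of_not_indep hY fun hzYi => ?_
  rcases mem_union.1 hz with hzF | hzG
  · have := card_le_r (M.subset_indep hzYi (insert_subset_insert z subset_union_left))
      (insert_subset hzF inter_subset_right)
    rw [card_insert_of_notMem (fun h => hzY (mem_union_left _ h)), hI.2.2] at this
    omega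
  · exact ha.not_indep_insert hk hG hGlev hI hzG
      (fun h => hzY (mem_union_right _ (mem_inter.2 ⟨h, hzG⟩))) hzYi

lemma VanishesOnTight.eq_of_kInseparable (ha : M.VanishesOnTight k F a) (hk : k = M.r univ)
    (hins : M.kInseparable k F) (he : e ∈ F) (hf : f ∈ F) : a e = a f := by
  by_contra hef
  obtain ⟨I, hI⟩ := exists_isTight (F := F) (hk ▸ r_mono (subset_univ _)) hk.le
  set F₁ := F.filter (a · = a e)
  set F₂ := F.filter fun x => ¬ a x = a e
  have hlev₁ : ∀ g ∈ F₁, ∀ h ∈ F, a h = a g → h ∈ F₁ := fun g hg h hh hhg =>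
    mem_filter.2 ⟨hh, hhg.trans (mem_filter.1 hg).2⟩
  have hlev₂ : ∀ g ∈ F₂, ∀ h ∈ F, a h = a g → h ∈ F₂ := fun g hg h hh hhg =>
    mem_filter.2 ⟨hh, hhg ▸ (mem_filter.1 hg).2⟩
  have hc₁ : F₁ᶜ = Fᶜ ∪ F₂ := by
    ext; simp only [F₁, F₂, mem_compl, mem_union, mem_filter]; tauto
  have hc₂ : F₂ᶜ = Fᶜ ∪ F₁ := by
    ext; simp only [F₁, F₂, mem_compl, mem_union, mem_filter]; tauto
  have hr₁ : M.r (Fᶜ ∪ F₂) = M.r Fᶜ + (I ∩ F₂).card :=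
    ha.r_compl_union_eq hk (filter_subset _ F) hlev₂ hI
  have hr₂ : M.r (Fᶜ ∪ F₁) = M.r Fᶜ + (I ∩ F₁).card :=
    ha.r_compl_union_eq hk (filter_subset _ F) hlev₁ hI
  have hdisj : Disjoint F₁ F₂ := disjoint_filter_filter_not F F _
  have hunion : F₁ ∪ F₂ = F := filter_union_filter_not_eq _ F
  have hcard := card_inter_union_of_disjoint I hdisj
  have := card_inter_add_card_inter_compl I F
  rw [hunion] at hcard
  refine hins ⟨F₁, F₂, ne_empty_of_mem (mem_filter.2 ⟨he, rfl⟩),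
    ne_empty_of_mem (mem_filter.2 ⟨hf, Ne.symm hef⟩), hdisj, hunion, ?_⟩
  obtain ⟨-, hIk, hIF⟩ := hI
  unfold krank
  rw [hc₁, hc₂, hr₁, hr₂]
  push_cast
  omega

lemma VanishesOnTight.eq_zero (ha : M.VanishesOnTight k F a) (hk : 1 ≤ M.krank k F)
    (hkr : k ≤ M.r univ) (hcl : M.ClosedSet Fᶜ) (hsep : M.kInseparable k F ∨ k < M.r univ) :
    ∀ e ∈ F, a e = 0 := by
  have hkF : M.r Fᶜ < k := by unfold krank at hk; omega
  have hconst : ∀ x ∈ F, ∀ y ∈ F, a x = a y := by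
    rcases hkr.lt_or_eq with hlt | heq
    · exact fun x hx y hy => ha.eq_of_lt_r_univ hkF hlt hcl hx hy
    · exact fun x hx y hy => ha.eq_of_kInseparable heq (hsep.resolve_right heq.not_lt) hx hy
  obtain ⟨I, hI⟩ := exists_isTight hkF.le hkr
  intro e he
  have hsum := ha I hI
  rw [sum_congr rfl fun x hx => hconst x (mem_inter.1 hx).2 e he, sum_const, nsmul_eq_mul] at hsum
  have hIF := (isTight_iff_card_inter_eq_krank.1 hI).2.2
  exact (mul_eq_zero.1 hsum).resolve_left (Nat.cast_ne_zero.2 (by omega))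

end FinMatroid

open FinMatroid in
theorem tight_vectors_span_iff_general {α : Type*} [Fintype α] [DecidableEq α]
    (M : FinMatroid α) (k : ℕ) (hkr : k ≤ M.r Finset.univ)
    (F : Finset α) (hF : F ≠ ∅) :
    Submodule.span ℝ {y : {e : α // e ∈ F} → ℝ |
        ∃ I : Finset α, M.Indep I ∧ I.card = k ∧
          ((I ∩ F).card : ℤ) = M.krank k F ∧ y = fun e => incVec I e.val} = ⊤ ↔
      (1 ≤ M.krank k F ∧ M.ClosedSet Fᶜ ∧
        (M.kInseparable k F ∨ k < M.r Finset.univ)) := by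
  have hT (I : Finset α) (p : Prop) : (M.Indep I ∧ I.card = k ∧
      ((I ∩ F).card : ℤ) = M.krank k F ∧ p) ↔ M.IsTight k F I ∧ p := by
    rw [isTight_iff_card_inter_eq_krank, and_assoc, and_assoc]
  simp only [hT]
  rw [span_incVec_restrict_eq_top_iff]
  constructor
  · intro h
    have hk : 1 ≤ M.krank k F := by
      by_contra! hk
      obtain ⟨e, he⟩ := nonempty_iff_ne_empty.2 hF
      simpa using h 1 (vanishesOnTight_of_krank_nonpos (by omega) 1) e he
    refine ⟨hk, fun e he => ?_, Or.inl fun hsep => ?_⟩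
    · by_contra! hr
      simpa using h _ (vanishesOnTight_single hr) e (by simpa using he)
    · obtain ⟨a, ha, e, he, hae⟩ := exists_vanishesOnTight_ne_zero_of_kSeparable hsep hk
      exact hae (h a ha e he)
  · rintro ⟨hk, hcl, hsep⟩ a ha
    exact VanishesOnTight.eq_zero ha hk hkr hcl hsep

/-- criterion for the restrictions to F of the incidence vectors of
the tight independent k-sets to span ℝ^F. -/
theorem tight_vectors_span_iff {α : Type*} [Fintype α] [DecidableEq α]
    (M : FinMatroid α) (k : ℕ) (hk0 : 0 < k) (hkr : k ≤ M.r Finset.univ)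
    (F : Finset α) (hF : F ≠ ∅) :
    Submodule.span ℝ {y : {e : α // e ∈ F} → ℝ |
        ∃ I : Finset α, M.Indep I ∧ I.card = k ∧
          ((I ∩ F).card : ℤ) = M.krank k F ∧ y = fun e => incVec I e.val} = ⊤ ↔
      (1 ≤ M.krank k F ∧ M.ClosedSet Fᶜ ∧
        (M.kInseparable k F ∨ k < M.r Finset.univ)) :=
  tight_vectors_span_iff_general M k hkr F hF
end
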